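/- For each n ≥ 1, the number of Baxter permutations of [n] equals the number of twisted Baxter permutations of [n]. -/

import Mathlib

def IsBaxter {n : ℕ} (σ : Equiv.Perm (Fin n)) : Prop :=
  (¬ ∃ (i k : Fin n) (j : ℕ) (hj : j + 1 < n),
      i.1 < j ∧ j + 1 < k.1 ∧
      σ ⟨j + 1, hj⟩ < σ i ∧ σ i < σ k ∧ σ k < σ ⟨j, Nat.lt_of_succ_lt hj⟩) ∧
  (¬ ∃ (i k : Fin n) (j : ℕ) (hj : j + 1 < n),
      i.1 < j ∧ j + 1 < k.1 ∧
      σ ⟨j, Nat.lt_of_succ_lt hj⟩ < σ k ∧ σ k < σ i ∧ σ i < σ ⟨j + 1, hj⟩)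

def IsTwistedBaxter {n : ℕ} (σ : Equiv.Perm (Fin n)) : Prop :=
  ¬ ∃ (i k : Fin n) (j : ℕ) (hj : j + 1 < n),
      i.1 < j ∧ j + 1 < k.1 ∧
      ((σ ⟨j + 1, hj⟩ < σ i ∧ σ i < σ k ∧ σ k < σ ⟨j, Nat.lt_of_succ_lt hj⟩) ∨
       (σ ⟨j + 1, hj⟩ < σ k ∧ σ k < σ i ∧ σ i < σ ⟨j, Nat.lt_of_succ_lt hj⟩))

/-
Both classes are closed under deleting the largest entry, so every member of size `n + 1` arises
from a member of size `n` of the same class by inserting `n + 1` into one of the `n + 1` gaps.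
Label a permutation by `(h, k)`, its numbers of left-to-right and right-to-left maxima. For a
Baxter permutation the admissible gaps are those just before a left-to-right maximum and just
after a right-to-left maximum; for a twisted Baxter permutation they are those just before a
left-to-right or a right-to-left maximum, and the last gap. Either way, the children of a
permutation labelled `(h, k)` are labelled `(1, k + 1), …, (h, k + 1), (h + 1, 1), …, (h + 1, k)`,
each exactly once: both classes have the same generating tree, and induction on `n` shows that
they have the same number of members with each label.
-/

open Finset

namespace Baxter

section Sequences

variable {R : ℕ → ℕ → ℕ → ℕ → Prop} {f : ℕ → ℕ} {n p : ℕ}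

def Occurs (R : ℕ → ℕ → ℕ → ℕ → Prop) (n : ℕ) (f : ℕ → ℕ) : Prop :=
  ∃ i j k, i < j ∧ j + 1 < k ∧ k < n ∧ R (f i) (f j) (f (j + 1)) (f k)

def Is2413 (a b c d : ℕ) : Prop := c < a ∧ a < d ∧ d < b

def Is3142 (a b c d : ℕ) : Prop := b < d ∧ d < a ∧ a < c

def Is3412 (a b c d : ℕ) : Prop := c < d ∧ d < a ∧ a < b

def insertAt (f : ℕ → ℕ) (p v : ℕ) (x : ℕ) : ℕ :=
  if x < p then f x else if x = p then v else f (x - 1)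

@[simp] theorem insertAt_of_lt {x : ℕ} (h : x < p) (v : ℕ) : insertAt f p v x = f x :=
  if_pos h

@[simp] theorem insertAt_self (v : ℕ) : insertAt f p v p = v := by simp [insertAt]

@[simp] theorem insertAt_succ_of_le {x : ℕ} (h : p ≤ x) (v : ℕ) :
    insertAt f p v (x + 1) = f x := by
  simp [insertAt, show ¬ x + 1 < p by omega, show x + 1 ≠ p by omega]

theorem insertAt_of_ne {x : ℕ} (h : x ≠ p) (v : ℕ) :
    insertAt f p v x = f (if x < p then x else x - 1) := by
  unfold insertAt; split_ifs <;> rfl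

theorem insertAt_shift (x v : ℕ) : insertAt f p v (if x < p then x else x + 1) = f x := by
  split_ifs with h
  · exact insertAt_of_lt h v
  · exact insertAt_succ_of_le (not_lt.mp h) v

theorem insertAt_lt (hv : Set.MapsTo f (Set.Iio n) (Set.Iio n)) (hp : p ≤ n) {x : ℕ}
    (hx : x < n + 1) (hxp : x ≠ p) :
    insertAt f p n x < n := by
  rw [insertAt_of_ne hxp]
  exact hv (show (if x < p then x else x - 1) < n by split_ifs <;> omega)

theorem occurs_of_occurs_insertAt_of_ne (hp : p ≤ n) {v i j k : ℕ} (hij : i < j)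
    (hjk : j + 1 < k) (hk : k < n + 1) (hi : i ≠ p) (hj : j ≠ p) (hj' : j + 1 ≠ p) (hk' : k ≠ p)
    (h : R (insertAt f p v i) (insertAt f p v j) (insertAt f p v (j + 1)) (insertAt f p v k)) :
    Occurs R n f := by
  rw [insertAt_of_ne hi, insertAt_of_ne hj, insertAt_of_ne hj', insertAt_of_ne hk'] at h
  refine ⟨if i < p then i else i - 1, if j < p then j else j - 1, if k < p then k else k - 1,
    by split_ifs <;> omega, by split_ifs <;> omega, by split_ifs <;> omega, ?_⟩
  convert h using 3
  split_ifs <;> omega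

theorem occurs_insertAt_of_occurs_of_ne {v i j k : ℕ} (hij : i < j) (hjk : j + 1 < k)
    (hk : k < n) (hp : p ≠ j + 1) (h : R (f i) (f j) (f (j + 1)) (f k)) :
    Occurs R (n + 1) (insertAt f p v) := by
  have e x : f x = insertAt f p v (if x < p then x else x + 1) := (insertAt_shift x v).symm
  rw [e i, e j, e (j + 1), e k] at h
  refine ⟨if i < p then i else i + 1, if j < p then j else j + 1, if k < p then k else k + 1,
    by split_ifs <;> omega, by split_ifs <;> omega, by split_ifs <;> omega, ?_⟩
  convert h using 3
  split_ifs <;> omega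

theorem occurs_insertAt_iff_of_max_snd (hv : Set.MapsTo f (Set.Iio n) (Set.Iio n)) (hp : p ≤ n)
    (hmax : ∀ a b c d, R a b c d → a < b ∧ c < b ∧ d < b)
    (hmono : ∀ a b c d b', R a b c d → b ≤ b' → R a b' c d) :
    Occurs R (n + 1) (insertAt f p n) ↔
      Occurs R n f ∨ ∃ i k, i < p ∧ p < k ∧ k < n ∧ R (f i) n (f p) (f k) := by
  constructor
  · rintro ⟨i, j, k, hij, hjk, hk, h⟩
    by_cases hj : j = p
    · subst hj
      obtain ⟨k, rfl⟩ : ∃ k', k = k' + 1 := ⟨k - 1, by omega⟩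
      rw [insertAt_of_lt hij, insertAt_self, insertAt_succ_of_le le_rfl,
        insertAt_succ_of_le (by omega)] at h
      exact Or.inr ⟨i, k, hij, by omega, by omega, h⟩
    · have hb := insertAt_lt hv hp (x := j) (by omega) hj
      obtain ⟨h1, h2, h3⟩ := hmax _ _ _ _ h
      refine Or.inl (occurs_of_occurs_insertAt_of_ne hp hij hjk hk ?_ hj ?_ ?_ h) <;>
        rintro rfl <;> simp only [insertAt_self] at h1 h2 h3 <;> omega
  · rintro (⟨i, j, k, hij, hjk, hk, h⟩ | ⟨i, k, hip, hpk, hk, h⟩)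
    · by_cases hpj : p = j + 1
      · subst hpj
        refine ⟨i, j + 1, k + 1, by omega, by omega, by omega, ?_⟩
        rw [insertAt_of_lt (by omega), insertAt_self, insertAt_succ_of_le le_rfl,
          insertAt_succ_of_le (by omega)]
        exact hmono _ _ _ _ _ h (hv (show j < n by omega)).le
      · exact occurs_insertAt_of_occurs_of_ne hij hjk hk hpj h
    · refine ⟨i, p, k + 1, hip, by omega, by omega, ?_⟩
      rwa [insertAt_of_lt hip, insertAt_self, insertAt_succ_of_le le_rfl,
        insertAt_succ_of_le hpk.le]

theorem occurs_insertAt_iff_of_max_thd (hv : Set.MapsTo f (Set.Iio n) (Set.Iio n)) (hp : p ≤ n)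
    (hmax : ∀ a b c d, R a b c d → a < c ∧ b < c ∧ d < c)
    (hmono : ∀ a b c d c', R a b c d → c ≤ c' → R a b c' d) :
    Occurs R (n + 1) (insertAt f p n) ↔
      Occurs R n f ∨ ∃ i k, i + 1 < p ∧ p ≤ k ∧ k < n ∧ R (f i) (f (p - 1)) n (f k) := by
  constructor
  · rintro ⟨i, j, k, hij, hjk, hk, h⟩
    by_cases hj : j + 1 = p
    · subst hj
      obtain ⟨k, rfl⟩ : ∃ k', k = k' + 1 := ⟨k - 1, by omega⟩
      rw [insertAt_of_lt (by omega), insertAt_of_lt (by omega), insertAt_self,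
        insertAt_succ_of_le (by omega)] at h
      exact Or.inr ⟨i, k, by omega, by omega, by omega, by simpa using h⟩
    · have hc := insertAt_lt hv hp (x := j + 1) (by omega) hj
      obtain ⟨h1, h2, h3⟩ := hmax _ _ _ _ h
      refine Or.inl (occurs_of_occurs_insertAt_of_ne hp hij hjk hk ?_ ?_ hj ?_ h) <;>
        rintro rfl <;> simp only [insertAt_self] at h1 h2 h3 <;> omega
  · rintro (⟨i, j, k, hij, hjk, hk, h⟩ | ⟨i, k, hip, hpk, hk, h⟩)
    · by_cases hpj : p = j + 1
      · subst hpj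
        refine ⟨i, j, k + 1, hij, by omega, by omega, ?_⟩
        rw [insertAt_of_lt (by omega), insertAt_of_lt (by omega), insertAt_self,
          insertAt_succ_of_le (by omega)]
        exact hmono _ _ _ _ _ h (hv (show j + 1 < n by omega)).le
      · exact occurs_insertAt_of_occurs_of_ne hij hjk hk hpj h
    · obtain ⟨q, rfl⟩ : ∃ q, p = q + 1 := ⟨p - 1, by omega⟩
      refine ⟨i, q, k + 1, by omega, by omega, by omega, ?_⟩
      rw [insertAt_of_lt (by omega), insertAt_of_lt (by omega), insertAt_self,
        insertAt_succ_of_le hpk]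
      simpa using h

def lrMax (f : ℕ → ℕ) (n : ℕ) : Finset ℕ := {p ∈ range n | ∀ i < p, f i < f p}

def rlMax (f : ℕ → ℕ) (n : ℕ) : Finset ℕ := {p ∈ range n | ∀ k ∈ Ioo p n, f k < f p}

@[simp] theorem mem_lrMax : p ∈ lrMax f n ↔ p < n ∧ ∀ i < p, f i < f p := by simp [lrMax]

@[simp] theorem mem_rlMax : p ∈ rlMax f n ↔ p < n ∧ ∀ k, p < k → k < n → f k < f p := by
  simp [rlMax, and_imp]

theorem le_of_mem_lrMax_of_mem_rlMax {x y : ℕ} (hx : x ∈ lrMax f n) (hy : y ∈ rlMax f n) :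
    x ≤ y := by
  rw [mem_lrMax] at hx
  rw [mem_rlMax] at hy
  by_contra! h
  exact lt_asymm (hx.2 y h) (hy.2 x h hx.1)

theorem exists_lt_of_notMem_lrMax (hinj : Set.InjOn f (Set.Iio n)) (hp : p < n)
    (h : p ∉ lrMax f n) : ∃ i < p, f p < f i := by
  simp only [mem_lrMax, hp, true_and, not_forall, not_lt] at h
  obtain ⟨i, hi, hle⟩ := h
  exact ⟨i, hi, hle.lt_of_ne fun he => hi.ne (hinj (hp.trans' hi) hp he.symm)⟩

theorem exists_lt_of_notMem_rlMax (hinj : Set.InjOn f (Set.Iio n)) (hp : p < n)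
    (h : p ∉ rlMax f n) : ∃ k, p < k ∧ k < n ∧ f p < f k := by
  simp only [mem_rlMax, hp, true_and, not_forall, not_lt] at h
  obtain ⟨k, hpk, hk, hle⟩ := h
  exact ⟨k, hpk, hk, hle.lt_of_ne fun he => hpk.ne (hinj hp hk he)⟩

theorem exists_forall_ne_lt (hinj : Set.InjOn f (Set.Iio n)) (hn : 0 < n) :
    ∃ w < n, ∀ x < n, x ≠ w → f x < f w := by
  obtain ⟨w, hw, hmax⟩ := exists_max_image (range n) f (nonempty_range_iff.mpr hn.ne')
  refine ⟨w, mem_range.mp hw, fun x hx hxw => (hmax x (mem_range.mpr hx)).lt_of_ne ?_⟩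
  exact fun he => hxw (hinj hx (mem_range.mp hw) he)

theorem exists_lrMax_inter_rlMax_eq_singleton (hinj : Set.InjOn f (Set.Iio n)) (hn : 0 < n) :
    ∃ w, lrMax f n ∩ rlMax f n = {w} := by
  obtain ⟨w, hw, hmax⟩ := exists_forall_ne_lt hinj hn
  refine ⟨w, eq_singleton_iff_unique_mem.mpr ⟨?_, fun x hx => ?_⟩⟩
  · simp only [mem_inter, mem_lrMax, mem_rlMax]
    exact ⟨⟨hw, fun i hi => hmax i (by omega) hi.ne⟩, hw, fun k hk hkn => hmax k hkn hk.ne'⟩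
  · simp only [mem_inter, mem_lrMax, mem_rlMax] at hx
    by_contra hxw
    rcases Nat.lt_or_gt_of_ne hxw with h | h
    · exact lt_asymm (hx.2.2 w h hw) (hmax x hx.1.1 hxw)
    · exact lt_asymm (hx.1.2 w h) (hmax x hx.1.1 hxw)

def label (f : ℕ → ℕ) (n : ℕ) : ℕ × ℕ := (#(lrMax f n), #(rlMax f n))

def childLabel (f : ℕ → ℕ) (n p : ℕ) : ℕ × ℕ :=
  (#{x ∈ lrMax f n | x < p} + 1, #{x ∈ rlMax f n | p ≤ x} + 1)

def childLabels (x : ℕ × ℕ) : Finset (ℕ × ℕ) :=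
  Icc 1 x.1 ×ˢ {x.2 + 1} ∪ {x.1 + 1} ×ˢ Icc 1 x.2

theorem card_childLabels (x : ℕ × ℕ) : #(childLabels x) = x.1 + x.2 := by
  rw [childLabels, card_union_of_disjoint, card_product, card_product]
  · simp
  · simp only [disjoint_left, mem_product, mem_Icc, mem_singleton]
    omega

theorem lrMax_insertAt (hv : Set.MapsTo f (Set.Iio n) (Set.Iio n)) (hp : p ≤ n) :
    lrMax (insertAt f p n) (n + 1) = insert p {x ∈ lrMax f n | x < p} := by
  ext x
  simp only [mem_lrMax, mem_insert, mem_filter]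
  rcases lt_trichotomy x p with hx | rfl | hx
  · have hg : ∀ i ≤ x, insertAt f p n i = f i := fun i hi => insertAt_of_lt (by omega) n
    simp only [hx.ne, hx, false_or, and_true]
    constructor <;> rintro ⟨-, h⟩ <;> refine ⟨by omega, fun i hi => ?_⟩
    · simpa only [hg i hi.le, hg x le_rfl] using h i hi
    · simpa only [hg i hi.le, hg x le_rfl] using h i hi
  · simp only [insertAt_self, true_or, iff_true]
    exact ⟨by omega, fun i hi => by simpa [insertAt_of_lt hi] using hv (show i < n by omega)⟩
  · simp only [hx.ne', hx.not_gt, false_or, and_false, iff_false, not_and, not_forall, not_lt]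
    exact fun hxn => ⟨p, hx, by simpa using (insertAt_lt hv hp hxn hx.ne').le⟩

theorem rlMax_insertAt (hv : Set.MapsTo f (Set.Iio n) (Set.Iio n)) (hp : p ≤ n) :
    rlMax (insertAt f p n) (n + 1) = insert p ({x ∈ rlMax f n | p ≤ x}.image (· + 1)) := by
  ext x
  simp only [mem_rlMax, mem_insert, mem_image, mem_filter]
  rcases lt_trichotomy x p with hx | rfl | hx
  · refine iff_of_false (fun ⟨hxn, h⟩ => ?_) ?_
    · have := h p hx (by omega)
      rw [insertAt_self] at this
      exact this.not_gt (insertAt_lt hv hp hxn hx.ne)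
    · rintro (rfl | ⟨y, ⟨-, hy⟩, rfl⟩) <;> omega
  · simp only [insertAt_self, true_or, iff_true]
    exact ⟨by omega, fun k hk hkn => insertAt_lt hv hp hkn hk.ne'⟩
  · obtain ⟨y, rfl⟩ : ∃ y, x = y + 1 := ⟨x - 1, by omega⟩
    simp only [hx.ne', false_or, add_left_inj, exists_eq_right,
      insertAt_succ_of_le (show p ≤ y by omega)]
    rw [and_iff_left (show p ≤ y by omega), add_lt_add_iff_right]
    refine and_congr_right fun _ => ⟨fun h k hk hkn => ?_, fun h k hk hkn => ?_⟩
    · simpa [insertAt_succ_of_le (show p ≤ k by omega)] using h (k + 1) (by omega) (by omega)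
    · obtain ⟨k, rfl⟩ : ∃ k', k = k' + 1 := ⟨k - 1, by omega⟩
      rw [insertAt_succ_of_le (by omega)]
      exact h k (by omega) (by omega)

theorem label_insertAt (hv : Set.MapsTo f (Set.Iio n) (Set.Iio n)) (hp : p ≤ n) :
    label (insertAt f p n) (n + 1) = childLabel f n p := by
  rw [label, childLabel, lrMax_insertAt hv hp, rlMax_insertAt hv hp,
    card_insert_of_notMem (by simp), card_insert_of_notMem (by simp; omega),
    card_image_of_injective _ (add_left_injective 1)]

theorem childLabel_mem_childLabels {w : ℕ} (hw : w ∈ lrMax f n ∩ rlMax f n) (p : ℕ) :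
    childLabel f n p ∈ childLabels (label f n) := by
  rw [mem_inter] at hw
  simp only [childLabel, childLabels, label, mem_union, mem_product, mem_Icc, mem_singleton]
  rcases le_or_gt p w with hpw | hpw
  · left
    have hlt : #{x ∈ lrMax f n | x < p} < #(lrMax f n) :=
      card_lt_card (filter_ssubset.mpr ⟨w, hw.1, hpw.not_gt⟩)
    have heq : {x ∈ rlMax f n | p ≤ x} = rlMax f n :=
      filter_true_of_mem fun y hy => hpw.trans (le_of_mem_lrMax_of_mem_rlMax hw.1 hy)
    rw [heq]
    omega
  · right
    have hlt : #{x ∈ rlMax f n | p ≤ x} < #(rlMax f n) :=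
      card_lt_card (filter_ssubset.mpr ⟨w, hw.2, hpw.not_ge⟩)
    have heq : {x ∈ lrMax f n | x < p} = lrMax f n :=
      filter_true_of_mem fun y hy => (le_of_mem_lrMax_of_mem_rlMax hy hw.2).trans_lt hpw
    rw [heq]
    omega

def RecordsSeparate (f : ℕ → ℕ) (n : ℕ) (S : Finset ℕ) : Prop :=
  ∀ p ∈ S, ∀ q ∈ S, p < q → ∃ x ∈ lrMax f n ∪ rlMax f n, p ≤ x ∧ x < q

theorem childLabel_injOn {S : Finset ℕ} (hS : RecordsSeparate f n S) :
    Set.InjOn (childLabel f n) S := by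
  intro p hp q hq hpq
  by_contra hne
  wlog hlt : p < q generalizing p q
  · exact this hq hp hpq.symm (Ne.symm hne) (lt_of_le_of_ne (not_lt.mp hlt) (Ne.symm hne))
  obtain ⟨x, hx, hpx, hxq⟩ := hS p hp q hq hlt
  simp only [childLabel, Prod.mk.injEq, add_left_inj] at hpq
  rcases mem_union.mp hx with hx | hx
  · refine hpq.1.not_lt (card_lt_card ((ssubset_iff_of_subset ?_).mpr ?_))
    · exact monotone_filter_right _ fun y _ (hy : y < p) => hy.trans hlt
    · exact ⟨x, mem_filter.mpr ⟨hx, hxq⟩, fun h => (mem_filter.mp h).2.not_ge hpx⟩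
  · refine hpq.2.not_gt (card_lt_card ((ssubset_iff_of_subset ?_).mpr ?_))
    · exact monotone_filter_right _ fun y _ (hy : q ≤ y) => hlt.le.trans hy
    · exact ⟨x, mem_filter.mpr ⟨hx, hpx⟩, fun h => (mem_filter.mp h).2.not_gt hxq⟩

theorem sum_childLabel {M : Type*} [AddCommMonoid M] (hinj : Set.InjOn f (Set.Iio n))
    (hn : 0 < n) {S : Finset ℕ} (hcard : #S = #(lrMax f n) + #(rlMax f n))
    (hS : RecordsSeparate f n S) (F : ℕ × ℕ → M) :
    ∑ p ∈ S, F (childLabel f n p) = ∑ x ∈ childLabels (label f n), F x := by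
  obtain ⟨w, hw⟩ := exists_lrMax_inter_rlMax_eq_singleton hinj hn
  have hw : w ∈ lrMax f n ∩ rlMax f n := hw ▸ mem_singleton_self w
  rw [← sum_image (childLabel_injOn hS)]
  congr 1
  refine eq_of_subset_of_card_le
    (image_subset_iff.mpr fun p _ => childLabel_mem_childLabels hw p) ?_
  rw [card_image_of_injOn (childLabel_injOn hS), card_childLabels, hcard, label]

def baxterSites (f : ℕ → ℕ) (n : ℕ) : Finset ℕ := lrMax f n ∪ (rlMax f n).image (· + 1)

def twistedSites (f : ℕ → ℕ) (n : ℕ) : Finset ℕ := insert n (lrMax f n ∪ rlMax f n)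

theorem baxterSites_subset_range : baxterSites f n ⊆ range (n + 1) := by
  intro x hx
  rcases mem_union.mp hx with hx | hx
  · exact mem_range.mpr ((mem_lrMax.mp hx).1.trans n.lt_succ_self)
  · obtain ⟨r, hr, rfl⟩ := mem_image.mp hx
    exact mem_range.mpr (Nat.succ_lt_succ (mem_rlMax.mp hr).1)

theorem twistedSites_subset_range : twistedSites f n ⊆ range (n + 1) := by
  intro x hx
  simp only [twistedSites, mem_insert, mem_union, mem_lrMax, mem_rlMax] at hx
  exact mem_range.mpr (by omega)

theorem card_baxterSites : #(baxterSites f n) = #(lrMax f n) + #(rlMax f n) := by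
  rw [baxterSites, card_union_of_disjoint, card_image_of_injective _ (add_left_injective 1)]
  refine disjoint_left.mpr fun x hx hx' => ?_
  obtain ⟨r, hr, rfl⟩ := mem_image.mp hx'
  have := le_of_mem_lrMax_of_mem_rlMax hx hr
  omega

theorem card_twistedSites (hinj : Set.InjOn f (Set.Iio n)) (hn : 0 < n) :
    #(twistedSites f n) = #(lrMax f n) + #(rlMax f n) := by
  obtain ⟨w, hw⟩ := exists_lrMax_inter_rlMax_eq_singleton hinj hn
  have := card_union_add_card_inter (lrMax f n) (rlMax f n)
  rw [hw, card_singleton] at this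
  rwa [twistedSites, card_insert_of_notMem (by simp)]

theorem recordsSeparate_baxterSites : RecordsSeparate f n (baxterSites f n) := by
  intro p hp q hq hpq
  rcases mem_union.mp hp with hp | hp
  · exact ⟨p, mem_union_left _ hp, le_rfl, hpq⟩
  obtain ⟨r, hr, rfl⟩ := mem_image.mp hp
  rcases mem_union.mp hq with hq | hq
  · have := le_of_mem_lrMax_of_mem_rlMax hq hr
    omega
  · obtain ⟨r', hr', rfl⟩ := mem_image.mp hq
    exact ⟨r', mem_union_right _ hr', by omega, by omega⟩

theorem recordsSeparate_twistedSites : RecordsSeparate f n (twistedSites f n) := by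
  intro p hp q hq hpq
  have hqn := mem_range.mp (twistedSites_subset_range hq)
  rcases mem_insert.mp hp with rfl | hp
  · omega
  · exact ⟨p, hp, le_rfl, hpq⟩

theorem mem_baxterSites_iff (hv : Set.MapsTo f (Set.Iio n) (Set.Iio n))
    (hinj : Set.InjOn f (Set.Iio n)) (hB : ¬ Occurs Is2413 n f ∧ ¬ Occurs Is3142 n f)
    (hn : 0 < n) (hp : p ≤ n) :
    p ∈ baxterSites f n ↔
      (¬ ∃ i k, i < p ∧ p < k ∧ k < n ∧ Is2413 (f i) n (f p) (f k)) ∧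
        ¬ ∃ i k, i + 1 < p ∧ p ≤ k ∧ k < n ∧ Is3142 (f i) (f (p - 1)) n (f k) := by
  constructor
  · intro hs
    rcases mem_union.mp hs with hlr | hrl
    · rw [mem_lrMax] at hlr
      refine ⟨fun ⟨i, k, hip, hpk, hk, h⟩ => (hlr.2 i hip).not_gt h.1,
        fun ⟨i, k, hip, hpk, hk, h⟩ => ?_⟩
      have hi := hlr.2 i (by omega)
      rcases hpk.eq_or_lt with rfl | hpk
      · exact h.2.1.not_gt hi
      · obtain ⟨q, rfl⟩ : ∃ q, p = q + 1 := ⟨p - 1, by omega⟩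
        exact hB.2 ⟨i, q, k, by omega, hpk, hk, by simpa using h.1, h.2.1, hi⟩
    · obtain ⟨r, hr, rfl⟩ := mem_image.mp hrl
      rw [mem_rlMax] at hr
      refine ⟨fun ⟨i, k, hip, hpk, hk, h⟩ => ?_, fun ⟨i, k, hip, hpk, hk, h⟩ => ?_⟩
      · have hkr := hr.2 k (by omega) hk
        rcases (Nat.lt_succ_iff.mp hip).eq_or_lt with rfl | hir
        · exact h.2.1.not_gt hkr
        · exact hB.1 ⟨i, r, k, hir, hpk, hk, h.1, h.2.1, hkr⟩
      · exact (hr.2 k (by omega) hk).not_gt (by simpa using h.1)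
  · rintro ⟨hA, hC⟩
    rcases Nat.eq_zero_or_pos p with rfl | hp0
    · exact mem_union_left _ (mem_lrMax.mpr ⟨hn, by simp⟩)
    rcases hp.eq_or_lt with rfl | hpn
    · exact mem_union_right _
        (mem_image.mpr ⟨p - 1, mem_rlMax.mpr ⟨by omega, by omega⟩, by omega⟩)
    by_contra hs
    obtain ⟨i, hip, hi⟩ :=
      exists_lt_of_notMem_lrMax hinj hpn fun h => hs (mem_union_left _ h)
    obtain ⟨k, hpk, hk, hkv⟩ := exists_lt_of_notMem_rlMax hinj (show p - 1 < n by omega)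
      fun h => hs (mem_union_right _ (mem_image.mpr ⟨p - 1, h, by omega⟩))
    -- the largest entry, at position `w`, is the `3` of a new 3-14-2 if `w < p`, and of a new
    -- 2-41-3 otherwise
    obtain ⟨w, hw, hmax⟩ := exists_forall_ne_lt hinj hn
    rcases lt_or_ge w p with hwp | hwp
    · have hwp' : w + 1 < p := by
        by_contra
        exact (hmax k hk (by omega)).not_gt (by rwa [show w = p - 1 by omega])
      exact hC ⟨w, k, hwp', by omega, hk, hkv, hmax k hk (by omega), hv hw⟩
    · have hpw : p ≠ w := by
        rintro rfl
        exact (hmax i (by omega) hip.ne).not_gt hi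
      exact hA ⟨i, w, hip, lt_of_le_of_ne hwp hpw, hw, hi, hmax i (by omega) (by omega),
        hv hw⟩

theorem mem_twistedSites_iff (hv : Set.MapsTo f (Set.Iio n) (Set.Iio n))
    (hinj : Set.InjOn f (Set.Iio n)) (hp : p ≤ n) :
    p ∈ twistedSites f n ↔
      (¬ ∃ i k, i < p ∧ p < k ∧ k < n ∧ Is2413 (f i) n (f p) (f k)) ∧
        ¬ ∃ i k, i < p ∧ p < k ∧ k < n ∧ Is3412 (f i) n (f p) (f k) := by
  constructor
  · intro hs
    rcases mem_insert.mp hs with rfl | hs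
    · exact ⟨fun ⟨_, _, _, hpk, hk, _⟩ => by omega, fun ⟨_, _, _, hpk, hk, _⟩ => by omega⟩
    rcases mem_union.mp hs with hlr | hrl
    · have hlt := (mem_lrMax.mp hlr).2
      exact ⟨fun ⟨i, _, hip, _, _, h⟩ => (hlt i hip).not_gt h.1,
        fun ⟨i, _, hip, _, _, h⟩ => (hlt i hip).not_gt (h.1.trans h.2.1)⟩
    · have hlt := (mem_rlMax.mp hrl).2
      exact ⟨fun ⟨_, k, _, hpk, hk, h⟩ => (hlt k hpk hk).not_gt (h.1.trans h.2.1),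
        fun ⟨_, k, _, hpk, hk, h⟩ => (hlt k hpk hk).not_gt h.1⟩
  · rintro ⟨hA, hD⟩
    rcases hp.eq_or_lt with rfl | hpn
    · exact mem_insert_self _ _
    by_contra hs
    obtain ⟨i, hip, hi⟩ := exists_lt_of_notMem_lrMax hinj hpn
      fun h => hs (mem_insert_of_mem (mem_union_left _ h))
    obtain ⟨k, hpk, hk, hkv⟩ := exists_lt_of_notMem_rlMax hinj hpn
      fun h => hs (mem_insert_of_mem (mem_union_right _ h))
    have hik : f i ≠ f k := fun h => (hip.trans hpk).ne (hinj (show i < n by omega) hk h)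
    rcases lt_or_gt_of_ne hik with h | h
    · exact hA ⟨i, k, hip, hpk, hk, hi, h, hv hk⟩
    · exact hD ⟨i, k, hip, hpk, hk, hkv, h, hv (show i < n by omega)⟩

end Sequences

section Permutations

open Equiv

variable {n : ℕ}

-- The padding by `0` beyond `n` makes `seq_insertMax` an equation of functions.
def seq (σ : Perm (Fin n)) (i : ℕ) : ℕ := if h : i < n then σ ⟨i, h⟩ else 0

theorem seq_of_lt (σ : Perm (Fin n)) {i : ℕ} (h : i < n) : seq σ i = σ ⟨i, h⟩ := dif_pos h

theorem mapsTo_seq (σ : Perm (Fin n)) : Set.MapsTo (seq σ) (Set.Iio n) (Set.Iio n) :=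
  fun i hi => by
    rw [Set.mem_Iio, seq_of_lt σ hi]
    exact (σ _).isLt

theorem injOn_seq (σ : Perm (Fin n)) : Set.InjOn (seq σ) (Set.Iio n) := fun i hi j hj h => by
  rw [seq_of_lt σ hi, seq_of_lt σ hj] at h
  exact congrArg Fin.val (σ.injective (Fin.val_injective h))

theorem occurs_seq_iff (σ : Perm (Fin n)) (R : ℕ → ℕ → ℕ → ℕ → Prop) :
    Occurs R n (seq σ) ↔ ∃ (i k : Fin n) (j : ℕ) (hj : j + 1 < n), i.1 < j ∧ j + 1 < k.1 ∧
      R (σ i) (σ ⟨j, Nat.lt_of_succ_lt hj⟩) (σ ⟨j + 1, hj⟩) (σ k) := by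
  constructor
  · rintro ⟨i, j, k, hij, hjk, hk, h⟩
    refine ⟨⟨i, by omega⟩, ⟨k, hk⟩, j, by omega, hij, hjk, ?_⟩
    rwa [seq_of_lt σ (by omega), seq_of_lt σ (by omega), seq_of_lt σ (by omega),
      seq_of_lt σ hk] at h
  · rintro ⟨i, k, j, hj, hij, hjk, h⟩
    refine ⟨i, j, k, hij, hjk, k.isLt, ?_⟩
    rwa [seq_of_lt σ i.isLt, seq_of_lt σ (by omega), seq_of_lt σ hj, seq_of_lt σ k.isLt]

theorem occurs_or {R R' : ℕ → ℕ → ℕ → ℕ → Prop} {f : ℕ → ℕ} :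
    Occurs (fun a b c d => R a b c d ∨ R' a b c d) n f ↔ Occurs R n f ∨ Occurs R' n f := by
  simp only [Occurs, and_or_left, exists_or]

theorem isBaxter_iff (σ : Perm (Fin n)) :
    IsBaxter σ ↔ ¬ Occurs Is2413 n (seq σ) ∧ ¬ Occurs Is3142 n (seq σ) := by
  rw [occurs_seq_iff, occurs_seq_iff]
  rfl

theorem isTwistedBaxter_iff (σ : Perm (Fin n)) :
    IsTwistedBaxter σ ↔ ¬ Occurs Is2413 n (seq σ) ∧ ¬ Occurs Is3412 n (seq σ) := by
  rw [← not_or, ← occurs_or, occurs_seq_iff]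
  rfl

def insertMax (σ : Perm (Fin n)) (p : Fin (n + 1)) : Perm (Fin (n + 1)) :=
  (finSuccEquiv' p).trans ((optionCongr σ).trans (finSuccEquiv' (Fin.last n)).symm)

@[simp] theorem insertMax_self (σ : Perm (Fin n)) (p : Fin (n + 1)) :
    insertMax σ p p = Fin.last n := by
  simp [insertMax]

@[simp] theorem insertMax_succAbove (σ : Perm (Fin n)) (p : Fin (n + 1)) (i : Fin n) :
    insertMax σ p (p.succAbove i) = (σ i).castSucc := by
  simp [insertMax]

theorem seq_insertMax (σ : Perm (Fin n)) (p : Fin (n + 1)) :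
    seq (insertMax σ p) = insertAt (seq σ) p n := by
  funext x
  obtain ⟨p, hp⟩ := p
  change seq (insertMax σ ⟨p, hp⟩) x = insertAt (seq σ) p n x
  rcases lt_trichotomy x p with hx | rfl | hx
  · have hxn : x < n := by omega
    have : (⟨x, by omega⟩ : Fin (n + 1)) = Fin.succAbove ⟨p, hp⟩ ⟨x, hxn⟩ :=
      (Fin.succAbove_of_castSucc_lt ⟨p, hp⟩ ⟨x, hxn⟩ (by simpa [Fin.lt_def] using hx)).symm
    rw [insertAt_of_lt hx, seq_of_lt _ (by omega), seq_of_lt σ hxn, this, insertMax_succAbove,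
      Fin.val_castSucc]
  · rw [seq_of_lt _ hp, insertMax_self, insertAt_self, Fin.val_last]
  · obtain ⟨y, rfl⟩ : ∃ y, x = y + 1 := ⟨x - 1, by omega⟩
    rw [insertAt_succ_of_le (by omega)]
    by_cases hy : y < n
    · have : (⟨y + 1, by omega⟩ : Fin (n + 1)) = Fin.succAbove ⟨p, hp⟩ ⟨y, hy⟩ :=
        (Fin.succAbove_of_le_castSucc ⟨p, hp⟩ ⟨y, hy⟩ (by simp [Fin.le_def]; omega)).symm
      rw [seq_of_lt _ (by omega), seq_of_lt σ hy, this, insertMax_succAbove, Fin.val_castSucc]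
    · rw [seq, seq, dif_neg hy, dif_neg (by omega)]

theorem insertMax_injective :
    Function.Injective fun x : Perm (Fin n) × Fin (n + 1) => insertMax x.1 x.2 := by
  rintro ⟨σ, p⟩ ⟨τ, q⟩ h
  dsimp only at h
  obtain rfl : p = q := (insertMax τ q).injective (by rw [insertMax_self, ← h, insertMax_self])
  refine Prod.ext (Equiv.ext fun i => ?_) rfl
  simpa using DFunLike.congr_fun h (p.succAbove i)

noncomputable def insertMaxEquiv (n : ℕ) : Perm (Fin n) × Fin (n + 1) ≃ Perm (Fin (n + 1)) :=
  Equiv.ofBijective _ <| (Fintype.bijective_iff_injective_and_card _).mpr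
    ⟨insertMax_injective, by simp [Fintype.card_perm, Nat.factorial_succ, mul_comm]⟩

theorem sum_filter_insertMax {M : Type*} [AddCommMonoid M] (C : Perm (Fin n) → Prop)
    (C' : Perm (Fin (n + 1)) → Prop) [DecidablePred C] [DecidablePred C']
    (S : Perm (Fin n) → Finset (Fin (n + 1))) (hC : ∀ σ p, C' (insertMax σ p) ↔ C σ ∧ p ∈ S σ)
    (g : Perm (Fin (n + 1)) → M) :
    ∑ τ with C' τ, g τ = ∑ σ with C σ, ∑ p ∈ S σ, g (insertMax σ p) := by
  rw [← sum_finset_product' {x | C x.1 ∧ x.2 ∈ S x.1} _ _ (by simp)]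
  exact (sum_equiv (insertMaxEquiv n) (by simp [insertMaxEquiv, hC])
    (by simp [insertMaxEquiv])).symm

theorem sum_filter_val_mem {M : Type*} [AddCommMonoid M] {S : Finset ℕ}
    (hS : S ⊆ range (n + 1)) (h : ℕ → M) : ∑ p : Fin (n + 1) with ↑p ∈ S, h p = ∑ p ∈ S, h p := by
  rw [sum_filter, Fin.sum_univ_eq_sum_range (fun p => if p ∈ S then h p else 0), ← sum_filter,
    filter_mem_eq_inter, inter_eq_right.mpr hS]

theorem sum_label_insertMax {M : Type*} [AddCommMonoid M] (hn : 0 < n)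
    (C : Perm (Fin n) → Prop) (C' : Perm (Fin (n + 1)) → Prop) [DecidablePred C] [DecidablePred C']
    (S : Perm (Fin n) → Finset ℕ) (hS : ∀ σ, S σ ⊆ range (n + 1))
    (hcard : ∀ σ, #(S σ) = #(lrMax (seq σ) n) + #(rlMax (seq σ) n))
    (hsep : ∀ σ, RecordsSeparate (seq σ) n (S σ))
    (hC : ∀ σ p, C' (insertMax σ p) ↔ C σ ∧ ↑p ∈ S σ) (F : ℕ × ℕ → M) :
    ∑ τ with C' τ, F (label (seq τ) (n + 1)) =
      ∑ σ with C σ, ∑ x ∈ childLabels (label (seq σ) n), F x := by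
  rw [sum_filter_insertMax C C' (fun σ => {p | ↑p ∈ S σ}) (by simpa using hC)]
  refine sum_congr rfl fun σ _ => ?_
  simp_rw [seq_insertMax, label_insertAt (mapsTo_seq σ) (Fin.is_le _)]
  rw [sum_filter_val_mem (hS σ) fun p => F (childLabel (seq σ) n p)]
  exact sum_childLabel (injOn_seq σ) hn (hcard σ) (hsep σ) F

theorem isBaxter_insertMax_iff (hn : 0 < n) (σ : Perm (Fin n)) (p : Fin (n + 1)) :
    IsBaxter (insertMax σ p) ↔ IsBaxter σ ∧ ↑p ∈ baxterSites (seq σ) n := by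
  rw [isBaxter_iff, isBaxter_iff, seq_insertMax,
    occurs_insertAt_iff_of_max_snd (mapsTo_seq σ) (Fin.is_le p)
      (fun _ _ _ _ ⟨h₁, h₂, h₃⟩ => ⟨h₂.trans h₃, h₁.trans (h₂.trans h₃), h₃⟩)
      (fun _ _ _ _ _ ⟨h₁, h₂, h₃⟩ hb => ⟨h₁, h₂, h₃.trans_le hb⟩),
    occurs_insertAt_iff_of_max_thd (mapsTo_seq σ) (Fin.is_le p)
      (fun _ _ _ _ ⟨h₁, h₂, h₃⟩ => ⟨h₃, h₁.trans (h₂.trans h₃), h₂.trans h₃⟩)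
      (fun _ _ _ _ _ ⟨h₁, h₂, h₃⟩ hc => ⟨h₁, h₂, h₃.trans_le hc⟩),
    not_or, not_or, and_and_and_comm]
  exact and_congr_right fun hB =>
    (mem_baxterSites_iff (mapsTo_seq σ) (injOn_seq σ) hB hn (Fin.is_le p)).symm

theorem isTwistedBaxter_insertMax_iff (σ : Perm (Fin n)) (p : Fin (n + 1)) :
    IsTwistedBaxter (insertMax σ p) ↔ IsTwistedBaxter σ ∧ ↑p ∈ twistedSites (seq σ) n := by
  rw [isTwistedBaxter_iff, isTwistedBaxter_iff, seq_insertMax,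
    occurs_insertAt_iff_of_max_snd (mapsTo_seq σ) (Fin.is_le p)
      (fun _ _ _ _ ⟨h₁, h₂, h₃⟩ => ⟨h₂.trans h₃, h₁.trans (h₂.trans h₃), h₃⟩)
      (fun _ _ _ _ _ ⟨h₁, h₂, h₃⟩ hb => ⟨h₁, h₂, h₃.trans_le hb⟩),
    occurs_insertAt_iff_of_max_snd (mapsTo_seq σ) (Fin.is_le p)
      (fun _ _ _ _ ⟨h₁, h₂, h₃⟩ => ⟨h₃, h₁.trans (h₂.trans h₃), h₂.trans h₃⟩)
      (fun _ _ _ _ _ ⟨h₁, h₂, h₃⟩ hb => ⟨h₁, h₂, h₃.trans_le hb⟩),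
    mem_twistedSites_iff (mapsTo_seq σ) (injOn_seq σ) (Fin.is_le p), not_or, not_or,
    and_and_and_comm]

theorem not_occurs_of_le_three {R : ℕ → ℕ → ℕ → ℕ → Prop} {f : ℕ → ℕ} (hn : n ≤ 3) :
    ¬ Occurs R n f := by
  rintro ⟨i, j, k, hij, hjk, hk, -⟩
  omega

open scoped Classical in
theorem sum_label_baxter_eq_sum_label_twistedBaxter {M : Type*} [AddCommMonoid M]
    (hn : 1 ≤ n) (F : ℕ × ℕ → M) :
    ∑ σ : Perm (Fin n) with IsBaxter σ, F (label (seq σ) n) =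
      ∑ σ : Perm (Fin n) with IsTwistedBaxter σ, F (label (seq σ) n) := by
  induction n, hn using Nat.le_induction generalizing F with
  | base =>
    refine sum_congr (filter_congr fun σ _ => ?_) fun _ _ => rfl
    simp [isBaxter_iff, isTwistedBaxter_iff, not_occurs_of_le_three]
  | succ n hn ih =>
    rw [sum_label_insertMax hn _ _ _ (fun _ => baxterSites_subset_range)
        (fun _ => card_baxterSites) (fun _ => recordsSeparate_baxterSites)
        (isBaxter_insertMax_iff hn),
      sum_label_insertMax hn _ _ _ (fun _ => twistedSites_subset_range)
        (fun σ => card_twistedSites (injOn_seq σ) hn) (fun _ => recordsSeparate_twistedSites)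
        isTwistedBaxter_insertMax_iff]
    exact ih fun x => ∑ y ∈ childLabels x, F y

end Permutations

end Baxter

/-- The number of Baxter permutations of `[n]` equals the number of twisted
Baxter permutations of `[n]`. -/
theorem card_baxter_eq_card_twisted_baxter (n : ℕ) (hn : 1 ≤ n) :
    {σ : Equiv.Perm (Fin n) | IsBaxter σ}.ncard =
      {σ : Equiv.Perm (Fin n) | IsTwistedBaxter σ}.ncard := by
  classical
  simpa [Set.ncard_eq_toFinset_card'] using
    Baxter.sum_label_baxter_eq_sum_label_twistedBaxter hn fun _ => (1 : ℕ)
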